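/- Let T(A), Δ(A) = ‖A^{1/2}(μ₁-μ₂)‖², K₁(A) = 2Σᵢ tr(Σ_{i,A}²)/(nᵢ(nᵢ-1)) + 4tr(Σ_{1,A}Σ_{2,A})/(n₁n₂), and K₂(A) = 4Σᵢ μ_A^T Σ_{i,A} μ_A/nᵢ be as in the two-sample test. Then K₂(A) ≤ 8 Δ(A) √(K₁(A)); consequently K₁(A)/K₂(A) ≥ √(K₁(A))/(8Δ(A)). -/

import Mathlib

/-!
Write `S = A^{1/2} Σ A^{1/2}` and `v = A^{1/2}(μ₁ - μ₂)`. By Cauchy–Schwarz on the `p²` entries,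
`vᵀ S v = ∑ S_ij v_i v_j ≤ ‖v‖² ‖S‖_F = Δ √(tr S²)`. Every summand of `K₁` is nonnegative
(traces of products of positive semidefinite matrices), and `1/n² ≤ 2/(n(n-1))`, so
`tr(S_i²)/n_i² ≤ K₁`; hence each `vᵀ S_i v / n_i ≤ Δ √K₁` and `K₂ ≤ 8 Δ √K₁`.
The ratio bound follows, since `K₂ > 0` forces `√K₁ > 0`.
-/

open Matrix

open scoped ComplexOrder in
/-- The positive semidefinite square root of a positive semidefinite matrix
(the definition of `Matrix.PosSemidef.sqrt` from the older Mathlib, since removed). -/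
noncomputable def Matrix.PosSemidef.sqrt {n 𝕜 : Type*} [Fintype n] [RCLike 𝕜] [DecidableEq n]
    {A : Matrix n n 𝕜} (hA : A.PosSemidef) : Matrix n n 𝕜 :=
  hA.1.eigenvectorUnitary.1 * diagonal ((↑) ∘ Real.sqrt ∘ hA.1.eigenvalues) *
  (star hA.1.eigenvectorUnitary : Matrix n n 𝕜)

open scoped ComplexOrder in
theorem Matrix.PosSemidef.posSemidef_sqrt {n 𝕜 : Type*} [Fintype n] [RCLike 𝕜] [DecidableEq n]
    {A : Matrix n n 𝕜} (hA : A.PosSemidef) : hA.sqrt.PosSemidef := by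
  rw [Matrix.PosSemidef.sqrt, Matrix.star_eq_conjTranspose]
  refine PosSemidef.mul_mul_conjTranspose_same (posSemidef_diagonal_iff.mpr fun i => ?_) _
  exact RCLike.ofReal_nonneg.mpr (Real.sqrt_nonneg _)

open scoped ComplexOrder in
theorem Matrix.PosSemidef.sqrt_mul_mul_sqrt {n 𝕜 : Type*} [Fintype n] [RCLike 𝕜] [DecidableEq n]
    {A B : Matrix n n 𝕜} (hA : A.PosSemidef) (hB : B.PosSemidef) :
    (hA.sqrt * B * hA.sqrt).PosSemidef := by
  simpa only [hA.posSemidef_sqrt.1.eq] using hB.conjTranspose_mul_mul_same hA.sqrt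

open scoped ComplexOrder MatrixOrder in
theorem Matrix.PosSemidef.trace_mul_nonneg {n 𝕜 : Type*} [Fintype n] [RCLike 𝕜]
    {S T : Matrix n n 𝕜} (hS : S.PosSemidef) (hT : T.PosSemidef) : 0 ≤ (S * T).trace := by
  classical
  have hR : (CFC.sqrt T)ᴴ = CFC.sqrt T := (CFC.sqrt_nonneg T).posSemidef.1.eq
  rw [← CFC.sqrt_mul_sqrt_self T hT.nonneg, ← Matrix.mul_assoc, trace_mul_cycle]
  simpa only [hR] using (hS.conjTranspose_mul_mul_same (CFC.sqrt T)).trace_nonneg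

theorem Matrix.trace_transpose_mul_self {m n : Type*} [Fintype m] [Fintype n] (S : Matrix m n ℝ) :
    (Sᵀ * S).trace = ∑ i, ∑ j, S i j ^ 2 := by
  simp only [trace, diag, mul_apply, transpose_apply, sq]
  exact Finset.sum_comm

theorem Matrix.dotProduct_mulVec_sq_le {n : Type*} [Fintype n] (S : Matrix n n ℝ) (v : n → ℝ) :
    (v ⬝ᵥ (S *ᵥ v)) ^ 2 ≤ (Sᵀ * S).trace * (v ⬝ᵥ v) ^ 2 := by
  have hquad : v ⬝ᵥ (S *ᵥ v) = ∑ ij : n × n, S ij.1 ij.2 * (v ij.1 * v ij.2) := by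
    simp only [dotProduct, mulVec, Finset.mul_sum, Fintype.sum_prod_type]
    exact Finset.sum_congr rfl fun i _ => Finset.sum_congr rfl fun j _ => by ring
  have hnorm : (v ⬝ᵥ v) ^ 2 = ∑ ij : n × n, (v ij.1 * v ij.2) ^ 2 := by
    simp only [dotProduct, sq, Finset.sum_mul_sum, Fintype.sum_prod_type]
    exact Finset.sum_congr rfl fun i _ => Finset.sum_congr rfl fun j _ => by ring
  rw [hquad, hnorm, trace_transpose_mul_self, ← Fintype.sum_prod_type']
  exact Finset.sum_mul_sq_le_sq_mul_sq _ _ _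

theorem Matrix.IsSymm.dotProduct_mulVec_le {n : Type*} [Fintype n] {S : Matrix n n ℝ}
    (hS : S.IsSymm) (v : n → ℝ) : v ⬝ᵥ (S *ᵥ v) ≤ (v ⬝ᵥ v) * √((S * S).trace) := by
  have hsq := dotProduct_mulVec_sq_le S v
  rw [hS.eq] at hsq
  have hΔ : 0 ≤ v ⬝ᵥ v := Finset.sum_nonneg fun i _ => mul_self_nonneg (v i)
  calc v ⬝ᵥ (S *ᵥ v) ≤ √((S * S).trace * (v ⬝ᵥ v) ^ 2) := 
        (le_abs_self _).trans (Real.abs_le_sqrt hsq)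
    _ = (v ⬝ᵥ v) * √((S * S).trace) := by
      rw [Real.sqrt_mul' _ (sq_nonneg _), Real.sqrt_sq hΔ, mul_comm]

theorem div_sq_le_two_mul_div_mul_sub_one {n t : ℝ} (hn : 1 < n) (ht : 0 ≤ t) :
    t / n ^ 2 ≤ 2 * (t / (n * (n - 1))) := by
  rw [← mul_div_assoc, div_le_div_iff₀ (by positivity) (by nlinarith)]
  nlinarith

theorem Matrix.IsSymm.dotProduct_mulVec_div_le {n : Type*} [Fintype n] {S : Matrix n n ℝ}
    (hS : S.IsSymm) (v : n → ℝ) {m K : ℝ} (hm : 0 < m) (hK : (S * S).trace / m ^ 2 ≤ K) :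
    v ⬝ᵥ (S *ᵥ v) / m ≤ (v ⬝ᵥ v) * √K := by
  have hsqrt : √((S * S).trace) ≤ m * √K := by
    rw [div_le_iff₀ (by positivity)] at hK
    calc √((S * S).trace) ≤ √(K * m ^ 2) := Real.sqrt_le_sqrt hK
      _ = m * √K := by rw [Real.sqrt_mul' _ (sq_nonneg _), Real.sqrt_sq hm.le, mul_comm]
  have hΔ : 0 ≤ v ⬝ᵥ v := Finset.sum_nonneg fun i _ => mul_self_nonneg (v i)
  rw [div_le_iff₀ hm]
  calc v ⬝ᵥ (S *ᵥ v) ≤ (v ⬝ᵥ v) * √((S * S).trace) := hS.dotProduct_mulVec_le v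
    _ ≤ (v ⬝ᵥ v) * (m * √K) := mul_le_mul_of_nonneg_left hsqrt hΔ
    _ = (v ⬝ᵥ v) * √K * m := by ring

theorem Real.sqrt_div_le_div_of_le_mul_sqrt {a b c : ℝ} (hb : 0 < b) (hc : 0 < c)
    (h : c ≤ b * √a) : √a / b ≤ a / c := by
  have ha : 0 < √a := pos_of_mul_pos_right (hc.trans_le h) hb.le
  rw [div_le_div_iff₀ hb hc]
  calc √a * c ≤ √a * (b * √a) := mul_le_mul_of_nonneg_left h ha.le
    _ = a * b := by rw [mul_left_comm, Real.mul_self_sqrt (Real.sqrt_pos.mp ha).le, mul_comm]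

/-- `K₂(A) ≤ 8 Δ(A) √(K₁(A))`, and consequently
`K₁(A)/K₂(A) ≥ √(K₁(A))/(8Δ(A))` (when `Δ(A) > 0` and `K₂(A) > 0`). -/
theorem K2_le_and_K1_div_K2_ge
    (p : ℕ) (n₁ n₂ : ℝ) (hn₁ : 2 ≤ n₁) (hn₂ : 2 ≤ n₂)
    (A Sig₁ Sig₂ : Matrix (Fin p) (Fin p) ℝ)
    (hA : A.PosSemidef) (hSig₁ : Sig₁.PosSemidef) (hSig₂ : Sig₂.PosSemidef)
    (μ₁ μ₂ : Fin p → ℝ) :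
    let μA : Fin p → ℝ := hA.sqrt *ᵥ (μ₁ - μ₂)
    let S₁ : Matrix (Fin p) (Fin p) ℝ := hA.sqrt * Sig₁ * hA.sqrt
    let S₂ : Matrix (Fin p) (Fin p) ℝ := hA.sqrt * Sig₂ * hA.sqrt
    let Δ : ℝ := μA ⬝ᵥ μA
    let K₁ : ℝ := 2 * ((S₁ * S₁).trace / (n₁ * (n₁ - 1)) + (S₂ * S₂).trace / (n₂ * (n₂ - 1)))
      + 4 * (S₁ * S₂).trace / (n₁ * n₂)
    let K₂ : ℝ := 4 * ((μA ⬝ᵥ (S₁ *ᵥ μA)) / n₁ + (μA ⬝ᵥ (S₂ *ᵥ μA)) / n₂)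
    K₂ ≤ 8 * Δ * Real.sqrt K₁ ∧
      (0 < Δ → 0 < K₂ → Real.sqrt K₁ / (8 * Δ) ≤ K₁ / K₂) := by
  intro μA S₁ S₂ Δ K₁ K₂
  have hS₁ : S₁.PosSemidef := hA.sqrt_mul_mul_sqrt hSig₁
  have hS₂ : S₂.PosSemidef := hA.sqrt_mul_mul_sqrt hSig₂
  have hT₁ := hS₁.trace_mul_nonneg hS₁
  have hT₂ := hS₂.trace_mul_nonneg hS₂
  have hT₁₂ := hS₁.trace_mul_nonneg hS₂
  have hU₁ : 0 ≤ (S₁ * S₁).trace / (n₁ * (n₁ - 1)) := div_nonneg hT₁ (by nlinarith)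
  have hU₂ : 0 ≤ (S₂ * S₂).trace / (n₂ * (n₂ - 1)) := div_nonneg hT₂ (by nlinarith)
  have hU₁₂ : 0 ≤ 4 * (S₁ * S₂).trace / (n₁ * n₂) := by positivity
  have hb₁ : (S₁ * S₁).trace / n₁ ^ 2 ≤ K₁ := by
    linarith [div_sq_le_two_mul_div_mul_sub_one (n := n₁) (by linarith) hT₁]
  have hb₂ : (S₂ * S₂).trace / n₂ ^ 2 ≤ K₁ := by
    linarith [div_sq_le_two_mul_div_mul_sub_one (n := n₂) (by linarith) hT₂]
  have hK₂ : K₂ ≤ 8 * Δ * √K₁ := by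
    have h₁ := (isHermitian_iff_isSymm.mp hS₁.1).dotProduct_mulVec_div_le μA (by linarith) hb₁
    have h₂ := (isHermitian_iff_isSymm.mp hS₂.1).dotProduct_mulVec_div_le μA (by linarith) hb₂
    change 4 * _ ≤ _
    linarith
  exact ⟨hK₂, fun hΔ hK₂pos =>
    Real.sqrt_div_le_div_of_le_mul_sqrt (by positivity) hK₂pos (by linarith)⟩
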